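/- Let N, l, m be positive integers with l ≤ N − 1, N ≠ 2l and 1 ≤ m ≤ N, and set K₀ = √N·(√(2e) + √(2e + 4))/4. Then E[exp((Ṽ_l(m,N))²/K₀²)] ≤ 2; consequently the sub-Gaussian norm of Ṽ_l(m,N), defined as inf{K > 0 : E[exp((Ṽ_l(m,N))²/K²)] ≤ 2}, is at most √N·(√(2e) + √(2e + 4))/4. -/

import Mathlib

/-!
Each `B n - p` (with `p = m / N`) takes values in an interval of length one, so by Hoeffding's
lemma it has a sub-Gaussian mgf with variance proxy `1 / 4`. Since the sines `sin (2π n l / N)`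
sum to zero, `V = ∑ aₙ (B n - p)` with `|aₙ| ≤ 1`, hence by independence `V` is sub-Gaussian with
proxy `c ≤ N / 4`. Linearizing `exp (V² / K²)` by a Gaussian integral and applying the mgf bound
gives `E[exp (V² / K²)] ≤ (1 - 2c / K²)^(-1/2)`, which is at most `2` once `8c ≤ 3K²`; the
given `K` satisfies `K² ≥ 25 N / 16`.
-/

open MeasureTheory ProbabilityTheory Finset Real
open scoped NNReal ENNReal

lemma sum_Icc_one_eq_sum_fin {M : Type*} [AddCommMonoid M] (N : ℕ) (g : ℕ → M) :
    ∑ n ∈ Icc 1 N, g n = ∑ i : Fin N, g (i + 1) := by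
  rw [Fin.sum_univ_eq_sum_range (fun i => g (i + 1)), range_eq_Ico, sum_Ico_add' g,
    Ico_add_one_right_eq_Icc]

lemma sum_Icc_sin_two_pi_mul_div_eq_zero (N l : ℕ) :
    ∑ n ∈ Icc 1 N, sin (2 * π * n * l / N) = 0 := by
  set f : ℕ → ℝ := fun n => sin (2 * π * n * l / N)
  have hrange : ∑ n ∈ Icc 1 N, f n = ∑ n ∈ range (N + 1), f n := by
    rw [sum_range_succ', sum_Icc_one_eq_sum_fin, Fin.sum_univ_eq_sum_range (fun i => f (i + 1))]
    simp [f]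
  have hreflect : ∀ n ∈ range (N + 1), f (N - n) = -f n := by
    intro n hn
    rcases Nat.eq_zero_or_pos N with rfl | hN
    · simp [f]
    have hN' : (N : ℝ) ≠ 0 := by positivity
    simp only [f, Nat.cast_sub (Nat.lt_succ_iff.mp (mem_range.mp hn))]
    rw [← sin_nat_mul_two_pi_sub _ l]
    congr 1
    field_simp
  have hsymm := sum_range_reflect f (N + 1)
  rw [Nat.add_sub_cancel, sum_congr rfl hreflect, sum_neg_distrib] at hsymm
  linarith

lemma exp_mul_sub_sq_half_eq (y x : ℝ) :
    exp (y * x - x ^ 2 / 2) = exp (y ^ 2 / 2) * exp (-(1 / 2) * (x - y) ^ 2) := by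
  rw [← exp_add]
  ring_nf

lemma integrable_exp_mul_sub_sq_half (y : ℝ) :
    Integrable (fun x : ℝ => exp (y * x - x ^ 2 / 2)) := by
  simp_rw [exp_mul_sub_sq_half_eq y]
  exact ((integrable_exp_neg_mul_sq (by norm_num)).comp_sub_right y).const_mul _

lemma integral_exp_mul_sub_sq_half (y : ℝ) :
    ∫ x, exp (y * x - x ^ 2 / 2) = √(2 * π) * exp (y ^ 2 / 2) := by
  simp_rw [exp_mul_sub_sq_half_eq y]
  rw [integral_const_mul, integral_sub_right_eq_self (fun x => exp (-(1 / 2) * x ^ 2)) y,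
    integral_gaussian]
  norm_num [div_div_eq_mul_div, mul_comm]

namespace ProbabilityTheory.HasSubgaussianMGF

variable {Ω : Type*} [MeasurableSpace Ω] {μ : Measure Ω} {X : Ω → ℝ} {c : ℝ≥0}

lemma mono {c' : ℝ≥0} (h : HasSubgaussianMGF X c μ) (hc : c ≤ c') : HasSubgaussianMGF X c' μ :=
  ⟨h.integrable_exp_mul, fun t => (h.mgf_le t).trans (exp_le_exp.mpr (by gcongr))⟩

lemma lintegral_exp_mul_sub_sq_half_le (h : HasSubgaussianMGF X c μ) (s x : ℝ) :
    ∫⁻ ω, ENNReal.ofReal (exp (s * X ω * x - x ^ 2 / 2)) ∂μ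
      ≤ ENNReal.ofReal (exp (-((1 - c * s ^ 2) / 2) * x ^ 2)) := by
  calc ∫⁻ ω, ENNReal.ofReal (exp (s * X ω * x - x ^ 2 / 2)) ∂μ
      = ∫⁻ ω, ENNReal.ofReal (exp (-(x ^ 2 / 2))) * ENNReal.ofReal (exp ((s * x) * X ω)) ∂μ := by
        refine lintegral_congr fun ω => ?_
        rw [← ENNReal.ofReal_mul (exp_pos _).le, ← exp_add]
        ring_nf
    _ = ENNReal.ofReal (exp (-(x ^ 2 / 2))) * ENNReal.ofReal (mgf X μ (s * x)) := by
        rw [lintegral_const_mul' _ _ ENNReal.ofReal_ne_top, mgf,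
          ofReal_integral_eq_lintegral_ofReal (h.integrable_exp_mul _)
            (ae_of_all _ fun ω => (exp_pos _).le)]
    _ ≤ ENNReal.ofReal (exp (-(x ^ 2 / 2))) * ENNReal.ofReal (exp (c * (s * x) ^ 2 / 2)) := by
        gcongr
        exact h.mgf_le _
    _ = ENNReal.ofReal (exp (-((1 - c * s ^ 2) / 2) * x ^ 2)) := by
        rw [← ENNReal.ofReal_mul (exp_pos _).le, ← exp_add]
        ring_nf

/-- The Gaussian integral `exp (y ^ 2 / 2) = (2π)^(-1/2) ∫ exp (y x - x ^ 2 / 2) dx` linearizes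
`exp (X ^ 2 / K ^ 2)`; after exchanging the integrals the mgf bound applies inside. -/
lemma integral_exp_sq_div_le [SFinite μ] (h : HasSubgaussianMGF X c μ) {K : ℝ}
    (hK : 2 * c < K ^ 2) :
    ∫ ω, exp (X ω ^ 2 / K ^ 2) ∂μ ≤ (√(1 - 2 * c / K ^ 2))⁻¹ := by
  have hK0 : 0 < K ^ 2 := lt_of_le_of_lt (by positivity) hK
  set s := √2 / K
  have hs : s ^ 2 = 2 / K ^ 2 := by rw [div_pow, sq_sqrt zero_le_two]
  set b := (1 - c * s ^ 2) / 2
  have hb : 0 < b := by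
    have : c * s ^ 2 < 1 := by rw [hs, mul_div_assoc', div_lt_one hK0]; linarith
    simp only [b]; linarith
  have hpoint : ∀ ω, exp (X ω ^ 2 / K ^ 2) = (√(2 * π))⁻¹ * ∫ x, exp (s * X ω * x - x ^ 2 / 2) := by
    intro ω
    rw [integral_exp_mul_sub_sq_half, mul_pow, hs, inv_mul_cancel_left₀ (by positivity)]
    ring_nf
  have hmeas : AEMeasurable (Function.uncurry fun ω x =>
      ENNReal.ofReal (exp (s * X ω * x - x ^ 2 / 2))) (μ.prod volume) := by
    have hX : AEMeasurable (fun z : Ω × ℝ => X z.1) (μ.prod volume) := h.aemeasurable.comp_fst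
    exact (((hX.const_mul s).mul measurable_snd.aemeasurable).sub
      (measurable_snd.pow_const 2 |>.div_const 2).aemeasurable).exp.ennreal_ofReal
  have hL : ∫⁻ ω, ENNReal.ofReal (exp (X ω ^ 2 / K ^ 2)) ∂μ
      ≤ ENNReal.ofReal ((√(2 * π))⁻¹ * √(π / b)) := by
    calc ∫⁻ ω, ENNReal.ofReal (exp (X ω ^ 2 / K ^ 2)) ∂μ
        = ENNReal.ofReal (√(2 * π))⁻¹ *
            ∫⁻ x, ∫⁻ ω, ENNReal.ofReal (exp (s * X ω * x - x ^ 2 / 2)) ∂μ := by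
          simp_rw [hpoint]
          rw [← lintegral_lintegral_swap hmeas, ← lintegral_const_mul' _ _ ENNReal.ofReal_ne_top]
          refine lintegral_congr fun ω => ?_
          rw [ENNReal.ofReal_mul (by positivity), ofReal_integral_eq_lintegral_ofReal
            (integrable_exp_mul_sub_sq_half _) (ae_of_all _ fun x => (exp_pos _).le)]
      _ ≤ ENNReal.ofReal (√(2 * π))⁻¹ * ∫⁻ x, ENNReal.ofReal (exp (-b * x ^ 2)) := by
          gcongr with x
          exact h.lintegral_exp_mul_sub_sq_half_le s x
      _ = ENNReal.ofReal ((√(2 * π))⁻¹ * √(π / b)) := by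
          rw [← ofReal_integral_eq_lintegral_ofReal (integrable_exp_neg_mul_sq hb)
            (ae_of_all _ fun x => (exp_pos _).le), integral_gaussian,
            ENNReal.ofReal_mul (by positivity)]
  have hconst : (√(2 * π))⁻¹ * √(π / b) = (√(1 - 2 * c / K ^ 2))⁻¹ := by
    rw [← sqrt_inv, ← sqrt_inv, ← sqrt_mul (by positivity)]
    congr 1
    simp only [b, hs]
    field_simp
  rw [integral_eq_lintegral_of_nonneg_ae (ae_of_all _ fun ω => (exp_pos _).le)
    (h.aemeasurable.pow_const 2 |>.div_const _ |>.exp).aestronglyMeasurable, ← hconst]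
  exact ENNReal.toReal_le_of_le_ofReal (by positivity) hL

lemma integral_exp_sq_div_le_two [SFinite μ] (h : HasSubgaussianMGF X c μ) {K : ℝ} (hK0 : K ≠ 0)
    (hK : 8 * c ≤ 3 * K ^ 2) : ∫ ω, exp (X ω ^ 2 / K ^ 2) ∂μ ≤ 2 := by
  have hK2 : 0 < K ^ 2 := by positivity
  have hratio : 2 * c / K ^ 2 ≤ 3 / 4 := by rw [div_le_iff₀ hK2]; linarith
  refine (h.integral_exp_sq_div_le (by linarith)).trans (inv_le_of_inv_le₀ two_pos ?_)
  rw [le_sqrt (by norm_num) (by linarith)]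
  linarith

end ProbabilityTheory.HasSubgaussianMGF

lemma ProbabilityTheory.hasSubgaussianMGF_sum_mul_of_sq_le_one {Ω ι : Type*} [MeasurableSpace Ω]
    {μ : Measure Ω} [Fintype ι] {Y : ι → Ω → ℝ} {c : ℝ≥0} (hindep : iIndepFun Y μ)
    (hY : ∀ i, HasSubgaussianMGF (Y i) c μ) (a : ι → ℝ) (ha : ∀ i, a i ^ 2 ≤ 1) :
    HasSubgaussianMGF (fun ω => ∑ i, a i * Y i ω) (Fintype.card ι * c) μ := by
  have hsum := HasSubgaussianMGF.sum_of_iIndepFun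
    (hindep.comp (fun i y => a i * y) fun i => by fun_prop) fun i (_ : i ∈ univ) =>
      (hY i).const_mul (a i)
  refine hsum.mono ((sum_le_card_nsmul _ _ c fun i _ => ?_).trans_eq (by simp))
  exact mul_le_of_le_one_left c.2 (ha i)

lemma sq_sqrt_two_mul_exp_one_add_sqrt_ge : 25 ≤ (√(2 * exp 1) + √(2 * exp 1 + 4)) ^ 2 := by
  have h2e : 2 ≤ √(2 * exp 1) := le_sqrt_of_sq_le (by linarith [exp_one_gt_d9])
  have h2e4 : 3 ≤ √(2 * exp 1 + 4) := le_sqrt_of_sq_le (by linarith [exp_one_gt_d9])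
  nlinarith

section Bernoulli

variable {Ω : Type*} [MeasurableSpace Ω] {P : Measure Ω} {B : Ω → ℝ}

lemma ae_eq_zero_or_eq_one [IsProbabilityMeasure P] (hB : Measurable B)
    (h : P {ω | B ω = 1} + P {ω | B ω = 0} = 1) : ∀ᵐ ω ∂P, B ω = 0 ∨ B ω = 1 := by
  have hdisj : Disjoint {ω | B ω = 1} {ω | B ω = 0} :=
    Set.disjoint_left.mpr fun ω h1 h0 => one_ne_zero (h1.symm.trans h0)
  rw [← measure_union hdisj (hB (measurableSet_singleton 0))] at h
  have hnull := (prob_compl_eq_zero_iff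
    ((hB (measurableSet_singleton 1)).union (hB (measurableSet_singleton 0)))).mpr h
  filter_upwards [measure_eq_zero_iff_ae_notMem.mp hnull] with ω hω
  simp only [Set.mem_compl_iff, not_not, Set.mem_union] at hω
  exact hω.symm

lemma integral_eq_measureReal_of_ae_eq_zero_or_one (hB : Measurable B)
    (h : ∀ᵐ ω ∂P, B ω = 0 ∨ B ω = 1) : ∫ ω, B ω ∂P = P.real {ω | B ω = 1} := by
  rw [← integral_indicator_one (s := {ω | B ω = 1}) (hB (measurableSet_singleton 1))]
  refine integral_congr_ae ?_
  filter_upwards [h] with ω hω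
  rcases hω with h0 | h1 <;> simp [Set.indicator, *]

lemma hasSubgaussianMGF_sub_measureReal_eq_one [IsProbabilityMeasure P] (hB : Measurable B)
    (h : P {ω | B ω = 1} + P {ω | B ω = 0} = 1) :
    HasSubgaussianMGF (fun ω => B ω - P.real {ω | B ω = 1}) (1 / 4) P := by
  have hae := ae_eq_zero_or_eq_one hB h
  have hIcc : ∀ᵐ ω ∂P, B ω ∈ Set.Icc (0 : ℝ) 1 := by
    filter_upwards [hae] with ω hω
    rcases hω with h0 | h1 <;> simp [*]
  have := hasSubgaussianMGF_of_mem_Icc hB.aemeasurable hIcc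
  rw [integral_eq_measureReal_of_ae_eq_zero_or_one hB hae] at this
  convert this using 1
  ext
  norm_num

end Bernoulli

theorem stmt_12_general
    {Ω : Type*} [MeasurableSpace Ω] (P : Measure Ω) [IsProbabilityMeasure P]
    (N l m : ℕ) (hN : 0 < N)
    (B : ℕ → Ω → ℝ) (hBmeas : ∀ n, Measurable (B n))
    (hBindep : iIndepFun (fun i : Fin N => B (i.1 + 1)) P)
    (hB1 : ∀ n ∈ Finset.Icc 1 N, P {ω | B n ω = 1} = (m : ENNReal) / N)
    (hB0 : ∀ n ∈ Finset.Icc 1 N, P {ω | B n ω = 0} = 1 - (m : ENNReal) / N)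
    (V : Ω → ℝ)
    (hV : V = fun ω => -∑ n ∈ Finset.Icc 1 N, Real.sin (2 * Real.pi * n * l / N) * B n ω) :
    (∫ ω, Real.exp ((V ω) ^ 2 / (Real.sqrt N * (Real.sqrt (2 * Real.exp 1) + Real.sqrt (2 * Real.exp 1 + 4)) / 4) ^ 2) ∂P) ≤ 2 ∧
    sInf {K : ℝ | 0 < K ∧ (∫ ω, Real.exp ((V ω) ^ 2 / K ^ 2) ∂P) ≤ 2}
      ≤ Real.sqrt N * (Real.sqrt (2 * Real.exp 1) + Real.sqrt (2 * Real.exp 1 + 4)) / 4 := by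
  set K := √N * (√(2 * exp 1) + √(2 * exp 1 + 4)) / 4
  set p := ((m : ℝ≥0∞) / N).toReal
  set a : ℕ → ℝ := fun n => -sin (2 * π * n * l / N)
  have hmem : ∀ i : Fin N, (i : ℕ) + 1 ∈ Icc 1 N := fun i => mem_Icc.mpr ⟨by omega, i.2⟩
  have hBsub : ∀ i : Fin N, HasSubgaussianMGF (fun ω => B (i + 1) ω - p) (1 / 4) P := by
    intro i
    have hsum : P {ω | B (i + 1) ω = 1} + P {ω | B (i + 1) ω = 0} = 1 := by
      rw [hB0 _ (hmem i), ← hB1 _ (hmem i)]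
      exact add_tsub_cancel_of_le prob_le_one
    simpa [measureReal_def, hB1 _ (hmem i), p] using
      hasSubgaussianMGF_sub_measureReal_eq_one (hBmeas _) hsum
  -- The sines sum to zero, so `V` is a sum of centred terms.
  have hVsum : V = fun ω => ∑ i : Fin N, a (i + 1) * (B (i + 1) ω - p) := by
    have hsin := sum_Icc_sin_two_pi_mul_div_eq_zero N l
    rw [sum_Icc_one_eq_sum_fin] at hsin
    ext ω
    simp only [hV, a, sum_Icc_one_eq_sum_fin, mul_sub, sum_sub_distrib, ← sum_mul,
      sum_neg_distrib, hsin]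
    simp [neg_mul]
  have hVsub : HasSubgaussianMGF V (N * (1 / 4)) P := by
    rw [hVsum]
    simpa using hasSubgaussianMGF_sum_mul_of_sq_le_one
      (hBindep.comp (fun _ x => x - p) fun _ => by fun_prop) hBsub (fun i => a (i + 1))
      fun i => by simpa [a] using sin_sq_le_one _
  have hK : 0 < K := by positivity
  have hparam : 8 * ((N * (1 / 4) : ℝ≥0) : ℝ) ≤ 3 * K ^ 2 := by
    have hS := sq_sqrt_two_mul_exp_one_add_sqrt_ge
    rw [div_pow, mul_pow, sq_sqrt (Nat.cast_nonneg N)]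
    push_cast
    nlinarith [mul_le_mul_of_nonneg_left hS (Nat.cast_nonneg (α := ℝ) N)]
  have hbound := hVsub.integral_exp_sq_div_le_two hK.ne' hparam
  exact ⟨hbound, csInf_le ⟨0, fun _ hK => hK.1.le⟩ ⟨hK, hbound⟩⟩

theorem stmt_12
    {Ω : Type*} [MeasurableSpace Ω] (P : Measure Ω) [IsProbabilityMeasure P]
    (N l m : ℕ) (hN : 0 < N) (hl : 0 < l) (hlN : l ≤ N - 1) (hNl : N ≠ 2 * l) (hm : 1 ≤ m)
    (hmN : m ≤ N)
    (B : ℕ → Ω → ℝ) (hBmeas : ∀ n, Measurable (B n))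
    (hBindep : iIndepFun (fun i : Fin N => B (i.1 + 1)) P)
    (hB1 : ∀ n ∈ Finset.Icc 1 N, P {ω | B n ω = 1} = (m : ENNReal) / N)
    (hB0 : ∀ n ∈ Finset.Icc 1 N, P {ω | B n ω = 0} = 1 - (m : ENNReal) / N)
    (V : Ω → ℝ)
    (hV : V = fun ω => -∑ n ∈ Finset.Icc 1 N, Real.sin (2 * Real.pi * n * l / N) * B n ω) :
    (∫ ω, Real.exp ((V ω) ^ 2 / (Real.sqrt N * (Real.sqrt (2 * Real.exp 1) + Real.sqrt (2 * Real.exp 1 + 4)) / 4) ^ 2) ∂P) ≤ 2 ∧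
    sInf {K : ℝ | 0 < K ∧ (∫ ω, Real.exp ((V ω) ^ 2 / K ^ 2) ∂P) ≤ 2}
      ≤ Real.sqrt N * (Real.sqrt (2 * Real.exp 1) + Real.sqrt (2 * Real.exp 1 + 4)) / 4 :=
  stmt_12_general P N l m hN B hBmeas hBindep hB1 hB0 V hV
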